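/- Any exor game can be won with certainty by classical players sharing PR nonlocal boxes pairwise: if each player i holds bits x_i and y_i (functions of its input), and the winning condition is ⊕_i out_i = (⊕_i x_i)·(⊕_i y_i) ⊕ c for a constant c depending on the inputs known to each player's share, then using one PR box between each pair (i,j) to compute shares of x_i·y_j, the players can output bits whose XOR equals (⊕_i x_i)·(⊕_i y_i). Concretely: x·y = ⊕_{i,j} x_i·y_j when x = ⊕_i x_i and y = ⊕_i y_i, and each cross term x_i·y_j (i ≠ j) can be obtained as the XOR of two locally-computable bits via a PR box. -/

import Mathlib

open Finset

section OffDiagonal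

variable {ι M : Type*} [Fintype ι] [DecidableEq ι] [AddCommMonoid M]

theorem sum_sum_erase_comm (f : ι → ι → M) :
    ∑ i, ∑ j ∈ univ.erase i, f j i = ∑ i, ∑ j ∈ univ.erase i, f i j :=
  sum_comm' fun i j => by simp [eq_comm, and_comm]

/-- Player `i` holds `u i j` from the box it shares with `j`, and `v j i` from the box `(j, i)`. -/
theorem sum_sum_erase_shares {u v g : ι → ι → M}
    (huv : ∀ i j, i ≠ j → u i j + v i j = g i j) :
    ∑ i, ∑ j ∈ univ.erase i, (u i j + v j i) = ∑ i, ∑ j ∈ univ.erase i, g i j := by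
  calc ∑ i, ∑ j ∈ univ.erase i, (u i j + v j i)
      = ∑ i, ∑ j ∈ univ.erase i, u i j + ∑ i, ∑ j ∈ univ.erase i, v j i := by
        simp only [sum_add_distrib]
    _ = ∑ i, ∑ j ∈ univ.erase i, (u i j + v i j) := by
        rw [sum_sum_erase_comm v]; simp only [sum_add_distrib]
    _ = ∑ i, ∑ j ∈ univ.erase i, g i j :=
        sum_congr rfl fun i _ => sum_congr rfl fun j hj => huv i j (ne_of_mem_erase hj).symm

theorem sum_diag_add_sum_erase (g : ι → ι → M) :
    ∑ i, (g i i + ∑ j ∈ univ.erase i, g i j) = ∑ i, ∑ j, g i j :=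
  sum_congr rfl fun i _ => add_sum_erase _ _ (mem_univ i)

end OffDiagonal

theorem exor_game_pr_boxes (m : ℕ) (x y : Fin m → ZMod 2)
    (u v : Fin m → Fin m → ZMod 2)
    (huv : ∀ i j, i ≠ j → u i j + v i j = x i * y j) :
    ((∑ i, x i) * (∑ j, y j) = ∑ i, ∑ j, x i * y j) ∧
    (∑ i, (x i * y i + ∑ j ∈ Finset.univ.erase i, (u i j + v j i))
      = (∑ i, x i) * (∑ j, y j)) := by
  refine ⟨sum_mul_sum _ _ _ _, ?_⟩
  rw [sum_mul_sum, ← sum_diag_add_sum_erase, sum_add_distrib, sum_add_distrib,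
    sum_sum_erase_shares huv]
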